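/- The full IQF quantile function, obtained by gluing the left exponential extrapolation on (0, α₁], the piecewise-linear interpolation on [α₁, α_K], and the right exponential extrapolation on [α_K, 1), is monotone nondecreasing on all of (0,1), assuming the knot values v_1 < v_2 ≤ … ≤ v_{K−1} < v_K are nondecreasing with strict inequalities at both extremal pairs, and the tail parameters are chosen so that the pieces agree at the gluing points α₁ and α_K. Hence IQF never exhibits quantile crossing: α ≤ α' implies q(α) ≤ q(α'). -/

import Mathlib

/-!
Each piece of `q` is monotone: the interpolant because its slopes `(v_{k+1} - v_k)/(α_{k+1} - α_k)`
are nonnegative, the two logarithmic tails because the strict inequalities `v₁ < v₂` and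
`v_{K-1} < v_K` make `β_L, β_R > 0`. Consecutive pieces share their gluing point, so monotonicity
passes to the union `(0,1)`.
-/

open Set

theorem monotoneOn_Icc_of_monotoneOn_Icc_succ {α β : Type*} [LinearOrder α] [Preorder β]
    {f : α → β} {n : ℕ} {a : Fin (n + 1) → α} (ha : Monotone a)
    (hf : ∀ k : Fin n, MonotoneOn f (Icc (a k.castSucc) (a k.succ))) :
    MonotoneOn f (Icc (a 0) (a (Fin.last n))) := by
  suffices ∀ i, MonotoneOn f (Icc (a 0) (a i)) from this _
  intro i
  induction i using Fin.induction with
  | zero => simp only [Icc_self, monotoneOn_singleton]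
  | succ k ih =>
    have h0k : a 0 ≤ a k.castSucc := ha (Fin.zero_le _)
    have hk : a k.castSucc ≤ a k.succ := ha k.castSucc_le_succ
    rw [← Icc_union_Icc_eq_Icc h0k hk]
    exact ih.union_right (hf k) (isGreatest_Icc h0k) (isLeast_Icc hk)

theorem monotone_linear_interpolant {x₀ x₁ y₀ y₁ : ℝ} (hx : x₀ < x₁) (hy : y₀ ≤ y₁) :
    Monotone fun x => ((x₁ - x) * y₀ + (x - x₀) * y₁) / (x₁ - x₀) := by
  intro x x' hxx'
  apply div_le_div_of_nonneg_right _ (sub_pos.2 hx).le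
  nlinarith

theorem monotoneOn_log_left_tail {β c : ℝ} (hβ : 0 < β) (hc : 0 < c) (w : ℝ) :
    MonotoneOn (fun x => 1 / β * Real.log (x / c) + w) (Ioi 0) := by
  intro x (hx : 0 < x) y _ hxy
  dsimp only
  gcongr

theorem monotoneOn_log_right_tail {β d : ℝ} (hβ : 0 < β) (hd : 0 < d) (w : ℝ) :
    MonotoneOn (fun x => 1 / β * Real.log (d / (1 - x)) + w) (Iio 1) := by
  intro x _ y (hy : y < 1) hxy
  have : 0 < 1 - x := by linarith
  have : 0 < 1 - y := by linarith
  dsimp only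
  gcongr

/-- The full IQF quantile function (exponential left tail, piecewise-linear middle,
exponential right tail) is monotone nondecreasing on (0,1): no quantile crossing. -/
theorem iqf_no_quantile_crossing (n : ℕ) (hn : 1 ≤ n)
    (a : Fin (n + 1) → ℝ) (ha : StrictMono a)
    (ha0 : 0 < a 0) (halast : a (Fin.last n) < 1)
    (v : Fin (n + 1) → ℝ) (hv : Monotone v)
    (hv01 : v 0 < v 1)
    (hvlast : v ⟨n - 1, by omega⟩ < v (Fin.last n))
    (βL βR : ℝ)
    (hβL : βL = Real.log (a 1 / a 0) / (v 1 - v 0))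
    (hβR : βR = Real.log ((1 - a ⟨n - 1, by omega⟩) / (1 - a (Fin.last n)))
                  / (v (Fin.last n) - v ⟨n - 1, by omega⟩))
    (q : ℝ → ℝ)
    (hleft : ∀ x ∈ Set.Ioc (0:ℝ) (a 0),
      q x = (1 / βL) * Real.log (x / a 1) + v 1)
    (hmid : ∀ k : Fin n, ∀ x ∈ Set.Icc (a k.castSucc) (a k.succ),
      q x = ((a k.succ - x) * v k.castSucc + (x - a k.castSucc) * v k.succ)
              / (a k.succ - a k.castSucc))
    (hright : ∀ x ∈ Set.Ico (a (Fin.last n)) (1:ℝ),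
      q x = (1 / βR) * Real.log ((1 - a ⟨n - 1, by omega⟩) / (1 - x))
              + v ⟨n - 1, by omega⟩) :
    MonotoneOn q (Set.Ioo (0:ℝ) 1) := by
  set m : Fin (n + 1) := ⟨n - 1, by omega⟩
  have h01 : (0 : Fin (n + 1)) < 1 := by
    rw [Fin.lt_def, Fin.val_zero, Fin.val_one', Nat.mod_eq_of_lt] <;> omega
  have hm : m < Fin.last n := by rw [Fin.lt_def]; simp only [m, Fin.val_last]; omega
  have ham : a m < a (Fin.last n) := ha hm
  have hβL_pos : 0 < βL :=
    hβL ▸ div_pos (Real.log_pos ((one_lt_div ha0).2 (ha h01))) (sub_pos.2 hv01)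
  have hβR_pos : 0 < βR := hβR ▸
    div_pos (Real.log_pos ((one_lt_div (by linarith)).2 (by linarith))) (sub_pos.2 hvlast)
  have left : MonotoneOn q (Ioc 0 (a 0)) :=
    ((monotoneOn_log_left_tail hβL_pos (ha0.trans (ha h01)) (v 1)).mono Ioc_subset_Ioi_self).congr
      fun x hx => (hleft x hx).symm
  have mid : MonotoneOn q (Icc (a 0) (a (Fin.last n))) :=
    monotoneOn_Icc_of_monotoneOn_Icc_succ ha.monotone fun k =>
      ((monotone_linear_interpolant (ha Fin.castSucc_lt_succ) (hv k.castSucc_le_succ)).monotoneOn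
        _).congr fun x hx => (hmid k x hx).symm
  have right : MonotoneOn q (Ico (a (Fin.last n)) 1) :=
    ((monotoneOn_log_right_tail hβR_pos (by linarith) (v m)).mono Ico_subset_Iio_self).congr
      fun x hx => (hright x hx).symm
  have h0L : a 0 ≤ a (Fin.last n) := ha.monotone (Fin.zero_le _)
  have left_mid : MonotoneOn q (Ioc 0 (a (Fin.last n))) := by
    rw [← Ioc_union_Icc_eq_Ioc ha0 h0L]
    exact left.union_right mid (isGreatest_Ioc ha0) (isLeast_Icc h0L)
  rw [← Ioc_union_Ico_eq_Ioo (ha0.trans_le h0L) halast]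
  exact left_mid.union_right right (isGreatest_Ioc (ha0.trans_le h0L)) (isLeast_Ico halast)
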